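/- arXiv:2507.19504 — 2 statements merged into one kernel-verified Lean document; each statement's English description precedes it below -/
import Mathlib

section
/- Combinatorial Hodge decomposition: assuming ∂ ∘ ∂₊ = 0, the space V is the internal direct sum of the three subspaces range ∂₊, ker L, and range ∂†, and these three subspaces are pairwise orthogonal with respect to the inner product on V. -/
open scoped RealInnerProductSpace

/-- The combinatorial Laplacian `L = ∂₊ ∘ ∂₊† + ∂† ∘ ∂ : V → V`. -/
noncomputable def combLaplacian {U V W : Type*}
    [NormedAddCommGroup U] [InnerProductSpace ℝ U] [FiniteDimensional ℝ U]
    [NormedAddCommGroup V] [InnerProductSpace ℝ V] [FiniteDimensional ℝ V]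
    [NormedAddCommGroup W] [InnerProductSpace ℝ W] [FiniteDimensional ℝ W]
    (dPlus : U →ₗ[ℝ] V) (d : V →ₗ[ℝ] W) : V →ₗ[ℝ] V :=
  dPlus ∘ₗ LinearMap.adjoint dPlus + LinearMap.adjoint d ∘ₗ d

lemma mem_ker_combLaplacian_iff {U V W : Type*}
    [NormedAddCommGroup U] [InnerProductSpace ℝ U] [FiniteDimensional ℝ U]
    [NormedAddCommGroup V] [InnerProductSpace ℝ V] [FiniteDimensional ℝ V]
    [NormedAddCommGroup W] [InnerProductSpace ℝ W] [FiniteDimensional ℝ W]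
    (dPlus : U →ₗ[ℝ] V) (d : V →ₗ[ℝ] W) (v : V) :
    v ∈ LinearMap.ker (combLaplacian dPlus d) ↔
      LinearMap.adjoint dPlus v = 0 ∧ d v = 0 := by
  constructor
  · intro hv
    have hL : combLaplacian dPlus d v = 0 := hv
    have h0 : ⟪combLaplacian dPlus d v, v⟫ = 0 := by rw [hL]; simp
    have hexp : ⟪combLaplacian dPlus d v, v⟫ =
        ⟪LinearMap.adjoint dPlus v, LinearMap.adjoint dPlus v⟫ + ⟪d v, d v⟫ := by
      simp only [combLaplacian, LinearMap.add_apply, LinearMap.comp_apply,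
        inner_add_left]
      rw [← LinearMap.adjoint_inner_right dPlus, LinearMap.adjoint_inner_left d]
    have h1 : (0:ℝ) ≤ ⟪LinearMap.adjoint dPlus v, LinearMap.adjoint dPlus v⟫ :=
      real_inner_self_nonneg
    have h2 : (0:ℝ) ≤ ⟪d v, d v⟫ := real_inner_self_nonneg
    rw [hexp] at h0
    constructor
    · have : ⟪LinearMap.adjoint dPlus v, LinearMap.adjoint dPlus v⟫ = 0 := by linarith
      exact inner_self_eq_zero.mp this
    · have : ⟪d v, d v⟫ = 0 := by linarith
      exact inner_self_eq_zero.mp this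
  · rintro ⟨h1, h2⟩
    simp [combLaplacian, LinearMap.mem_ker, h1, h2]

/-- Combinatorial Hodge decomposition: if `∂ ∘ ∂₊ = 0` then
`V = range ∂₊ ⊕ ker L ⊕ range ∂†` as an internal direct sum of pairwise
orthogonal subspaces. -/
theorem combLaplacian_hodgeDecomposition {U V W : Type*}
    [NormedAddCommGroup U] [InnerProductSpace ℝ U] [FiniteDimensional ℝ U]
    [NormedAddCommGroup V] [InnerProductSpace ℝ V] [FiniteDimensional ℝ V]
    [NormedAddCommGroup W] [InnerProductSpace ℝ W] [FiniteDimensional ℝ W]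
    (dPlus : U →ₗ[ℝ] V) (d : V →ₗ[ℝ] W) (hc : d ∘ₗ dPlus = 0) :
    DirectSum.IsInternal
      (![LinearMap.range dPlus,
         LinearMap.ker (combLaplacian dPlus d),
         LinearMap.range (LinearMap.adjoint d)] : Fin 3 → Submodule ℝ V) ∧
    (∀ x ∈ LinearMap.range dPlus, ∀ y ∈ LinearMap.ker (combLaplacian dPlus d),
      ⟪x, y⟫ = 0) ∧
    (∀ x ∈ LinearMap.range dPlus, ∀ y ∈ LinearMap.range (LinearMap.adjoint d),
      ⟪x, y⟫ = 0) ∧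
    (∀ x ∈ LinearMap.ker (combLaplacian dPlus d),
      ∀ y ∈ LinearMap.range (LinearMap.adjoint d), ⟪x, y⟫ = 0) := by
  -- orthogonality facts
  have h01 : ∀ x ∈ LinearMap.range dPlus,
      ∀ y ∈ LinearMap.ker (combLaplacian dPlus d), ⟪x, y⟫ = 0 := by
    rintro _ ⟨u, rfl⟩ y hy
    rw [← LinearMap.adjoint_inner_right dPlus,
      ((mem_ker_combLaplacian_iff dPlus d y).mp hy).1, inner_zero_right]
  have h02 : ∀ x ∈ LinearMap.range dPlus,
      ∀ y ∈ LinearMap.range (LinearMap.adjoint d), ⟪x, y⟫ = 0 := by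
    rintro _ ⟨u, rfl⟩ _ ⟨w, rfl⟩
    rw [LinearMap.adjoint_inner_right d]
    have : d (dPlus u) = 0 := by
      have := congrArg (fun f => f u) hc; simpa using this
    rw [this, inner_zero_left]
  have h12 : ∀ x ∈ LinearMap.ker (combLaplacian dPlus d),
      ∀ y ∈ LinearMap.range (LinearMap.adjoint d), ⟪x, y⟫ = 0 := by
    rintro x hx _ ⟨w, rfl⟩
    rw [real_inner_comm, LinearMap.adjoint_inner_left d,
      ((mem_ker_combLaplacian_iff dPlus d x).mp hx).2, inner_zero_right]
  set Vf : Fin 3 → Submodule ℝ V :=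
    ![LinearMap.range dPlus, LinearMap.ker (combLaplacian dPlus d),
      LinearMap.range (LinearMap.adjoint d)] with hVf
  have ho : ∀ {A B : Submodule ℝ V}, (∀ x ∈ A, ∀ y ∈ B, ⟪x, y⟫ = 0) → A ⟂ B :=
    fun {A B} h x hx => (Submodule.mem_orthogonal' B x).mpr fun y hy => h x hx y hy
  have hOrtho : OrthogonalFamily ℝ (fun i => Vf i) fun i => (Vf i).subtypeₗᵢ := by
    refine OrthogonalFamily.of_pairwise ?_
    intro i j hij
    fin_cases i <;> fin_cases j <;>
      first
      | exact (hij rfl).elim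
      | exact ho h01
      | exact ho h02
      | exact ho h12
      | exact (ho h01).symm
      | exact (ho h02).symm
      | exact (ho h12).symm
  refine ⟨?_, h01, h02, h12⟩
  rw [hOrtho.isInternal_iff]
  rw [Submodule.eq_bot_iff]
  intro v hv
  have key : ∀ i, ∀ y ∈ Vf i, ⟪y, v⟫ = 0 := fun i y hy =>
    (Submodule.mem_orthogonal _ v).mp hv y (Submodule.mem_iSup_of_mem i hy)
  have hdp : LinearMap.adjoint dPlus v = 0 := by
    have h := key 0 (dPlus (LinearMap.adjoint dPlus v)) ⟨_, rfl⟩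
    rw [← LinearMap.adjoint_inner_right dPlus] at h
    exact inner_self_eq_zero.mp (by rw [real_inner_comm] at h; exact h)
  have hd : d v = 0 := by
    have h := key 2 (LinearMap.adjoint d (d v)) ⟨_, rfl⟩
    rw [LinearMap.adjoint_inner_left d] at h
    exact inner_self_eq_zero.mp (by rw [real_inner_comm] at h; exact h)
  have hker : v ∈ Vf 1 := (mem_ker_combLaplacian_iff dPlus d v).mpr ⟨hdp, hd⟩
  exact inner_self_eq_zero.mp (key 1 v hker)
end

section
/- Mayer Hodge theorem: for every q with 0 < q < N, the range of d^{N−q} is contained in ker(d^q), and the kernel of the Mayer Laplacian Δ_q is linearly isomorphic to the Mayer homology quotient (ker d^q) ⧸ (range d^{N−q}); in particular finrank(ker Δ_q) = finrank(ker d^q) − finrank(range d^{N−q}). -/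
open scoped RealInnerProductSpace

section Aux

variable {V : Type*} [NormedAddCommGroup V] [InnerProductSpace ℝ V] [FiniteDimensional ℝ V]

lemma mayer_ker_lap (A B : Module.End ℝ V) :
    LinearMap.ker (A ∘ₗ LinearMap.adjoint A + LinearMap.adjoint B ∘ₗ B) =
      LinearMap.ker (LinearMap.adjoint A) ⊓ LinearMap.ker B := by
  ext x
  simp only [LinearMap.mem_ker, LinearMap.add_apply, LinearMap.comp_apply, Submodule.mem_inf]
  constructor
  · intro h
    have h0 : ⟪A (LinearMap.adjoint A x) + LinearMap.adjoint B (B x), x⟫ = 0 := by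
      rw [h]; simp
    have e1 : ⟪A (LinearMap.adjoint A x), x⟫
        = ⟪LinearMap.adjoint A x, LinearMap.adjoint A x⟫ := by
      rw [real_inner_comm]
      exact (LinearMap.adjoint_inner_left A (LinearMap.adjoint A x) x).symm
    have e2 : ⟪LinearMap.adjoint B (B x), x⟫ = ⟪B x, B x⟫ :=
      LinearMap.adjoint_inner_left _ _ _
    rw [inner_add_left, e1, e2] at h0
    have n1 : (0:ℝ) ≤ ⟪LinearMap.adjoint A x, LinearMap.adjoint A x⟫ :=
      real_inner_self_nonneg
    have n2 : (0:ℝ) ≤ ⟪B x, B x⟫ := real_inner_self_nonneg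
    have z1 : ⟪LinearMap.adjoint A x, LinearMap.adjoint A x⟫ = 0 := by linarith
    have z2 : ⟪B x, B x⟫ = 0 := by linarith
    exact ⟨inner_self_eq_zero.mp z1, inner_self_eq_zero.mp z2⟩
  · rintro ⟨h1, h2⟩
    rw [h1, h2]; simp

lemma mayer_orth (A B : Module.End ℝ V) (hle : LinearMap.range A ≤ LinearMap.ker B) :
    Submodule.map (LinearMap.ker B).subtype
        (Submodule.comap (LinearMap.ker B).subtype (LinearMap.range A))ᗮ
      = LinearMap.ker (LinearMap.adjoint A) ⊓ LinearMap.ker B := by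
  ext z
  simp only [Submodule.mem_map, Submodule.mem_orthogonal, Submodule.mem_comap,
    Submodule.mem_inf, LinearMap.mem_ker]
  constructor
  · rintro ⟨⟨w, hw⟩, hperp, rfl⟩
    refine ⟨?_, hw⟩
    -- adjoint A w = 0 iff ⟪A y, w⟫ = 0 for all y
    have key : ∀ y, ⟪y, LinearMap.adjoint A w⟫ = 0 := by
      intro y
      rw [LinearMap.adjoint_inner_right]
      have hAy : A y ∈ LinearMap.ker B := hle ⟨y, rfl⟩
      have := hperp ⟨A y, hAy⟩ ⟨y, rfl⟩
      simpa [Submodule.coe_inner] using this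
    have := key (LinearMap.adjoint A w)
    exact inner_self_eq_zero.mp this
  · rintro ⟨h1, h2⟩
    refine ⟨⟨z, h2⟩, ?_, rfl⟩
    rintro ⟨u, hu⟩ ⟨y, hy⟩
    have : (⟪u, z⟫) = ⟪y, LinearMap.adjoint A z⟫ := by
      rw [LinearMap.adjoint_inner_right]
      have : A y = u := hy
      rw [this]
    simp [Submodule.coe_inner, this, h1]

end Aux

/-- Mayer Hodge theorem: let `d : V → V` satisfy `d^N = 0` with `N ≥ 2`. For
`0 < q < N`, `range d^(N−q) ⊆ ker d^q`, the kernel of the Mayer Laplacian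
`Δ_q = d^(N−q) ∘ (d^(N−q))† + (d^q)† ∘ d^q` is linearly isomorphic to the
Mayer homology quotient `(ker d^q) ⧸ (range d^(N−q))`, and
`dim ker Δ_q = dim ker d^q − dim range d^(N−q)`. -/
theorem mayer_hodge {V : Type*}
    [NormedAddCommGroup V] [InnerProductSpace ℝ V] [FiniteDimensional ℝ V]
    (N : ℕ) (hN : 2 ≤ N) (d : Module.End ℝ V) (hd : d ^ N = 0) :
    ∀ q : ℕ, 0 < q → q < N →
      LinearMap.range (d ^ (N - q)) ≤ LinearMap.ker (d ^ q) ∧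
      Nonempty
        (↥(LinearMap.ker ((d ^ (N - q)) ∘ₗ LinearMap.adjoint (d ^ (N - q))
            + LinearMap.adjoint (d ^ q) ∘ₗ (d ^ q))) ≃ₗ[ℝ]
          (↥(LinearMap.ker (d ^ q)) ⧸
            Submodule.comap (LinearMap.ker (d ^ q)).subtype
              (LinearMap.range (d ^ (N - q))))) ∧
      Module.finrank ℝ
          ↥(LinearMap.ker ((d ^ (N - q)) ∘ₗ LinearMap.adjoint (d ^ (N - q))
              + LinearMap.adjoint (d ^ q) ∘ₗ (d ^ q)))
        = Module.finrank ℝ ↥(LinearMap.ker (d ^ q))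
          - Module.finrank ℝ ↥(LinearMap.range (d ^ (N - q))) := by
  intro q hq hqN
  set A : Module.End ℝ V := d ^ (N - q) with hA
  set B : Module.End ℝ V := d ^ q with hB
  have hBA : B * A = 0 := by
    rw [hA, hB, ← pow_add]
    rwa [Nat.add_sub_cancel' hqN.le]
  have hle : LinearMap.range A ≤ LinearMap.ker B := by
    rintro _ ⟨y, rfl⟩
    have : (B * A) y = 0 := by rw [hBA]; rfl
    exact this
  set p : Submodule ℝ (LinearMap.ker B) :=
    Submodule.comap (LinearMap.ker B).subtype (LinearMap.range A) with hp
  -- finrank of p equals finrank of range A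
  have hpA : Module.finrank ℝ p = Module.finrank ℝ (LinearMap.range A) :=
    (Submodule.comapSubtypeEquivOfLe hle).finrank_eq
  -- finrank of pᗮ within ker B
  have hmap := mayer_orth A B hle
  have hperp : Module.finrank ℝ (pᗮ)
      = Module.finrank ℝ (LinearMap.ker (LinearMap.adjoint A) ⊓ LinearMap.ker B :
          Submodule ℝ V) := by
    rw [← (LinearMap.ker B).finrank_map_subtype_eq pᗮ, hmap]
  have hsum : Module.finrank ℝ p + Module.finrank ℝ (pᗮ)
      = Module.finrank ℝ (LinearMap.ker B) :=
    Submodule.finrank_add_finrank_orthogonal p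
  have hker : LinearMap.ker (A ∘ₗ LinearMap.adjoint A + LinearMap.adjoint B ∘ₗ B)
      = LinearMap.ker (LinearMap.adjoint A) ⊓ LinearMap.ker B := mayer_ker_lap A B
  have hdim : Module.finrank ℝ
      (LinearMap.ker (A ∘ₗ LinearMap.adjoint A + LinearMap.adjoint B ∘ₗ B))
      = Module.finrank ℝ (LinearMap.ker B) - Module.finrank ℝ (LinearMap.range A) := by
    rw [hker, ← hperp]
    omega
  refine ⟨hle, ?_, hdim⟩
  have hquot : Module.finrank ℝ ((LinearMap.ker B) ⧸ p) + Module.finrank ℝ p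
      = Module.finrank ℝ (LinearMap.ker B) := Submodule.finrank_quotient_add_finrank p
  exact FiniteDimensional.nonempty_linearEquiv_of_finrank_eq (by rw [hdim]; omega)
end
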